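/- Let L be a field, D an L-vector space of dimension d, F^• a filtration of D of type μ = (μ_1,…,μ_d) (μ nonincreasing), and D' ⊆ D a subspace of dimension d'. Assume the filtration is transverse to D', i.e. dim(F^i ∩ D') = max(0, dim F^i − (d − d')) for all i ∈ ℤ. Then the induced filtration F^i ∩ D' on D' has type (μ_{d−d'+1},…,μ_d), i.e. for every i ∈ ℤ the dimension of the i-th graded piece of the induced filtration equals #{j : d−d' < j ≤ d and μ_j = i}. -/

import Mathlib

/-! A filtration of type `μ` has `dim F^i = #{j | i ≤ μ j}`: both sides satisfy the same
recursion in `i` and vanish for `i > max μ` (separatedness). For antitone `μ` this set is the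
initial segment `{j | j < dim F^i}` of `Fin d`, so `{j | μ j = i}` is the interval
`[dim F^(i+1), dim F^i)`. Transversality says `dim (F^i ∩ D') = dim F^i - (d - d')` truncated
at `0`, and the difference of two consecutive such truncations counts exactly the indices of that
interval that are at least `d - d'`. -/

open Module

noncomputable section

variable (L : Type*) [Field L] (D : Type*) [AddCommGroup D] [Module L D]

/-- A decreasing, exhaustive and separated `ℤ`-indexed filtration by subspaces. -/
def IsFiltrationOfSubmodules (F : ℤ → Submodule L D) : Prop :=
  Antitone F ∧ (∀ x : D, ∃ i : ℤ, x ∈ F i) ∧ (∀ x : D, (∀ i : ℤ, x ∈ F i) → x = 0)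

/-- The filtration `F` is of type `μ`: the `i`-th graded piece `F i / F (i+1)` has
dimension `#{j | μ j = i}`. -/
def FiltrationOfType {d : ℕ} (F : ℤ → Submodule L D) (μ : Fin d → ℤ) : Prop :=
  IsFiltrationOfSubmodules L D F ∧
    ∀ i : ℤ, finrank L (F i) =
      finrank L (F (i + 1)) + (Finset.univ.filter fun j : Fin d => μ j = i).card


open Finset

lemma Fin.card_filter_le_val_and_val_lt {d b f : ℕ} (hf : f ≤ d) :
    #{j : Fin d | b ≤ (j : ℕ) ∧ (j : ℕ) < f} = f - b := by
  rw [← Nat.card_Ico, ← card_map Fin.valEmbedding]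
  congr 1
  ext n
  simp only [mem_map, mem_filter, mem_univ, true_and, valEmbedding_apply, exists_iff,
    exists_and_left, exists_prop, exists_eq_right_right, mem_Ico, and_iff_left_iff_imp, and_imp]
  omega

lemma card_filter_le_eq_card_filter_succ_le_add {ι : Type*} [Fintype ι] (μ : ι → ℤ)
    (i : ℤ) :
    #{j | i ≤ μ j} = #{j | i + 1 ≤ μ j} + #{j | μ j = i} := by
  rw [← card_filter_add_card_filter_not (s := {j | i ≤ μ j}) fun j ↦ i + 1 ≤ μ j,
    filter_filter, filter_filter]
  congr 2 <;> ext j <;> simp only [mem_filter, mem_univ, true_and] <;> omega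

lemma Antitone.card_filter_le_val_and_eq {d : ℕ} {μ : Fin d → ℤ} (hμ : Antitone μ)
    (a : ℕ) (i : ℤ) :
    #{j : Fin d | a ≤ (j : ℕ) ∧ μ j = i} = #{j | i ≤ μ j} - max a #{j | i + 1 ≤ μ j} := by
  have hlevel (k : ℤ) (j : Fin d) : k ≤ μ j ↔ j < #{j | k ≤ μ j} :=
    (Fin.lt_card_filter_univ_iff_apply_of_imp (fun j ↦ k ≤ μ j)
      fun _ _ hji hk ↦ hk.trans (hμ hji)).symm
  rw [← Fin.card_filter_le_val_and_val_lt (card_le_univ _ |>.trans (Fintype.card_fin d).le)]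
  congr 1
  ext j
  simp only [mem_filter, mem_univ, true_and, max_le_iff]
  have hi := hlevel i j
  have hi' := hlevel (i + 1) j
  omega

namespace FiltrationOfType

variable {L D} [FiniteDimensional L D] {d : ℕ} {F : ℤ → Submodule L D} {μ : Fin d → ℤ}

lemma eq_bot_of_forall_lt (hF : FiltrationOfType L D F μ) {M : ℤ} (hM : ∀ j, μ j < M) :
    F M = ⊥ := by
  obtain ⟨⟨hanti, -, hsep⟩, hstep⟩ := hF
  have hconst (n : ℤ) (hn : M ≤ n) : F n = F M := by
    induction n, hn using Int.leInduction with
    | base => rfl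
    | succ n hn ih =>
      have hempty : #{j | μ j = n} = 0 := card_eq_zero.2 <| filter_eq_empty_iff.2 fun j _ ↦ by
        have := hM j; omega
      rw [← ih]
      exact Submodule.eq_of_le_of_finrank_le (hanti (Int.le_add_one le_rfl))
        (by rw [hstep n, hempty, add_zero])
  refine eq_bot_iff.2 fun x hx ↦ (Submodule.mem_bot L).2 <| hsep x fun i ↦ ?_
  rcases le_total i M with hi | hi
  · exact hanti hi hx
  · rwa [hconst i hi]

lemma finrank_eq_card_filter_le (hF : FiltrationOfType L D F μ) (i : ℤ) :
    finrank L (F i) = #{j | i ≤ μ j} := by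
  obtain ⟨M, hM⟩ : ∃ M, ∀ j, μ j < M := by
    obtain ⟨M, hM⟩ := Finite.exists_le μ
    exact ⟨M + 1, fun j ↦ Int.lt_add_one_iff.2 (hM j)⟩
  have hvanish (k : ℤ) (hk : M ≤ k) : finrank L (F k) = #{j | k ≤ μ j} := by
    have : finrank L (F k) = 0 := by
      have := Submodule.finrank_mono (hF.1.1 hk)
      rw [hF.eq_bot_of_forall_lt hM, finrank_bot] at this
      omega
    rw [this, eq_comm, card_eq_zero, filter_eq_empty_iff]
    exact fun j _ ↦ by have := hM j; omega
  rcases le_total M i with hi | hi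
  · exact hvanish i hi
  induction i, hi using Int.leInductionDown with
  | base => exact hvanish M le_rfl
  | pred n _ ih =>
    rw [hF.2, card_filter_le_eq_card_filter_succ_le_add μ, sub_add_cancel, ih]

end FiltrationOfType

theorem induced_filtration_type_of_transverse
    [FiniteDimensional L D] (d : ℕ)
    (F : ℤ → Submodule L D) (μ : Fin d → ℤ) (hμ : Antitone μ)
    (htype : FiltrationOfType L D F μ)
    (D' : Submodule L D) (d' : ℕ)
    (htrans : ∀ i : ℤ, (finrank L (F i ⊓ D' : Submodule L D) : ℤ) =
      max 0 ((finrank L (F i) : ℤ) - ((d : ℤ) - (d' : ℤ)))) :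
    ∀ i : ℤ, finrank L (F i ⊓ D' : Submodule L D) =
      finrank L (F (i + 1) ⊓ D' : Submodule L D) +
        (Finset.univ.filter fun j : Fin d => d - d' ≤ (j : ℕ) ∧ μ j = i).card := by
  intro i
  rw [hμ.card_filter_le_val_and_eq, ← htype.finrank_eq_card_filter_le,
    ← htype.finrank_eq_card_filter_le]
  have hstep := htype.2 i
  have htrans_i := htrans i
  have htrans_succ := htrans (i + 1)
  omega
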